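/- arXiv:2206.11725 — 6 statements merged into one kernel-verified Lean document; each statement's English description precedes it below -/
import Mathlib

section
/- The stylic monoid styl_2 satisfies the identities xyxzx ≈ xyzx and (xy)² ≈ (yx)², and every monoid identity satisfied by styl_2 is a consequence of the set {xyxzx ≈ xyzx, (xy)² ≈ (yx)²}, i.e. holds in every monoid that satisfies both of these identities. In particular, styl_2 is finitely based. -/
/-- The (max-plus) tropical semiring carrier: ℝ ∪ {-∞}. -/
abbrev Trop : Type := WithBot ℝ

/-- Tropical (max-plus) matrix multiplication. -/
def tmul {m : ℕ} (A B : Matrix (Fin m) (Fin m) Trop) : Matrix (Fin m) (Fin m) Trop :=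
  fun i j => Finset.univ.sup fun k => A i k + B k j

/-- The tropical identity matrix. -/
def tropId (m : ℕ) : Matrix (Fin m) (Fin m) Trop :=
  fun i j => if i = j then (0 : Trop) else ⊥

/-- Tropical matrix power. -/
def tpow {m : ℕ} (A : Matrix (Fin m) (Fin m) Trop) : ℕ → Matrix (Fin m) (Fin m) Trop
  | 0 => tropId m
  | k + 1 => tmul A (tpow A k)

/-- A matrix is upper unitriangular if its diagonal entries are 0 (the tropical one)
and its entries below the diagonal are -∞ (the tropical zero). -/
def IsUnitriangular {m : ℕ} (A : Matrix (Fin m) (Fin m) Trop) : Prop :=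
  (∀ i, A i i = 0) ∧ ∀ i j : Fin m, j < i → A i j = ⊥

/-- For a letter `x` of `𝒜_n` (represented by `x : Fin n`, standing for the letter `x.val + 1`),
`bar x` is the matrix index corresponding to `x̄ = n + 1 - (x.val + 1)`
(indices `1, …, n+1` being represented by `Fin (n+1)`, index `i` as value `i - 1`). -/
def bar {n : ℕ} (x : Fin n) : Fin (n + 1) := ⟨n - 1 - x.val, by omega⟩

/-- The image of a letter under ρ_n. -/
def letterMat {n : ℕ} (x : Fin n) : Matrix (Fin (n + 1)) (Fin (n + 1)) Trop :=
  fun i j => if i = j then (0 : Trop) else if i ≤ bar x ∧ bar x < j then (1 : Trop) else ⊥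

/-- The homomorphism ρ_n on words over 𝒜_n. -/
def rhoList {n : ℕ} : List (Fin n) → Matrix (Fin (n + 1)) (Fin (n + 1)) Trop
  | [] => tropId (n + 1)
  | x :: xs => tmul (letterMat x) (rhoList xs)

/-- The defining relations of the stylic monoid: the Knuth relations together with
idempotency of the generators. Letters of `𝒜_n` are `Fin n` with its order. -/
inductive StylRel (n : ℕ) : FreeMonoid (Fin n) → FreeMonoid (Fin n) → Prop
  | knuth₁ (a b c : Fin n) : a ≤ b → b < c →
      StylRel n (.of a * .of c * .of b) (.of c * .of a * .of b)
  | knuth₂ (a b c : Fin n) : a < b → b ≤ c →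
      StylRel n (.of b * .of a * .of c) (.of b * .of c * .of a)
  | idem (a : Fin n) : StylRel n (.of a * .of a) (.of a)

/-- The stylic congruence on 𝒜_n^*. -/
def stylCon (n : ℕ) : Con (FreeMonoid (Fin n)) := conGen (StylRel n)

/-- The stylic monoid of rank n. -/
abbrev Styl (n : ℕ) := (stylCon n).Quotient

/-- A monoid `M` satisfies the identity `u ≈ v` if every evaluation of the variables
in `M` gives `u` and `v` the same value. -/
def Satisfies (M : Type*) [Monoid M] {σ : Type*} (u v : FreeMonoid σ) : Prop :=
  ∀ φ : FreeMonoid σ →* M, φ u = φ v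

/-- `up B a` is the smallest letter of `B` strictly greater than `a`
(`none` playing the role of ε). -/
def up {n : ℕ} (B : Finset (Fin n)) (a : Fin n) : Option (Fin n) :=
  if h : (B.filter fun b => a < b).Nonempty then some ((B.filter fun b => a < b).min' h)
  else none

/-- The map δ: `δ(ε) = ε` and `δ(w·a) = δ(w) · a↑_{supp w}`. -/
def delta {n : ℕ} (w : List (Fin n)) : List (Fin n) :=
  (List.range w.length).filterMap fun i => w[i]?.bind (up (w.take i).toFinset)

/-- The "arrow" maps: `arrow w 0 i = w_i`, and
`arrow w l i = (arrow w (l-1) i)↑_{supp(δ^{l-1}(w_{≤ i}))}` (positions 0-indexed). -/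
def arrow {n : ℕ} (w : List (Fin n)) : ℕ → ℕ → Option (Fin n)
  | 0, i => w[i]?
  | k + 1, i => (arrow w k i).bind (up (delta^[k] (w.take (i + 1))).toFinset)

/-- `w` has a strictly decreasing subsequence of length `k` all of whose letters `a`
satisfy `i ≤ ā < j`. -/
def HasDecrSubseq {n : ℕ} (w : List (Fin n)) (i j : Fin (n + 1)) (k : ℕ) : Prop :=
  ∃ (s : Fin k → ℕ) (hs : ∀ l, s l < w.length),
    StrictMono s ∧
    (∀ l m : Fin k, l < m → w[s m]'(hs m) < w[s l]'(hs l)) ∧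
    ∀ l : Fin k, i ≤ bar (w[s l]'(hs l)) ∧ bar (w[s l]'(hs l)) < j

/-- The involution on words: reverse and replace each letter `a` by `n + 1 - a`. -/
def wordStar {n : ℕ} (w : List (Fin n)) : List (Fin n) :=
  w.reverse.map fun a => ⟨n - 1 - a.val, by have := a.isLt; omega⟩

/-- Skew transposition of an `(m+1) × (m+1)` tropical matrix. -/
def skewT {m : ℕ} (A : Matrix (Fin (m + 1)) (Fin (m + 1)) Trop) :
    Matrix (Fin (m + 1)) (Fin (m + 1)) Trop :=
  fun i j => A ⟨m - j.val, by omega⟩ ⟨m - i.val, by omega⟩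


/-!
`styl_2` has five elements, the classes of `ε, 1, 2, 12, 21`, and `21` is a zero. Evaluating
`x ↦ 2, y ↦ 1` (or `x ↦ 12` when `x = y`) and every other variable to `ε` shows that an identity
`u ≈ v` of `styl_2` preserves the letters of its sides and their scattered subwords `xy` of
length two. Conversely, in a monoid satisfying `xyxzx ≈ xyzx` and `(xy)² ≈ (yx)²`, one may erase
an occurrence of a letter that also occurs before and after it, and swap two adjacent letters that
both occur again later or both occurred already earlier. These moves keep the short subwords, they
bring every word to one in which no letter occurs three times, and two such words with the same
short subwords are joined by swaps: bubble the first letter of one of them to the front of the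
other, which the short subwords allow, and recurse on the remainders.
-/

namespace List

variable {σ : Type*}

theorem pair_sublist_cons_iff {a b c : σ} {l : List σ} :
    [a, b] <+ c :: l ↔ (c = a ∧ b ∈ l) ∨ [a, b] <+ l := by
  rw [sublist_cons_iff]
  constructor
  · rintro (h | ⟨r, hr, h⟩)
    · exact Or.inr h
    · obtain ⟨rfl, rfl⟩ := List.cons_eq_cons.1 hr
      exact Or.inl ⟨rfl, singleton_sublist.1 h⟩
  · rintro (⟨rfl, h⟩ | h)
    · exact Or.inr ⟨[b], rfl, singleton_sublist.2 h⟩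
    · exact Or.inl h

theorem pair_sublist_append_iff {a b : σ} {l₁ l₂ : List σ} :
    [a, b] <+ l₁ ++ l₂ ↔ [a, b] <+ l₁ ∨ (a ∈ l₁ ∧ b ∈ l₂) ∨ [a, b] <+ l₂ := by
  induction l₁ with
  | nil => simp
  | cons c l₁ ih =>
    simp only [cons_append, pair_sublist_cons_iff, ih, mem_append, mem_cons]
    tauto

theorem pair_sublist_or_pair_sublist {a b : σ} {l : List σ} (ha : a ∈ l) (hb : b ∈ l)
    (hab : a ≠ b) : [a, b] <+ l ∨ [b, a] <+ l := by
  obtain ⟨l₁, l₂, rfl⟩ := append_of_mem ha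
  rcases mem_append.1 hb with hb | hb
  · exact Or.inr (pair_sublist_append_iff.2 (Or.inr (Or.inl ⟨hb, mem_cons_self⟩)))
  · exact Or.inl (pair_sublist_append_iff.2 (Or.inr (Or.inr
      (pair_sublist_cons_iff.2 (Or.inl ⟨rfl, (mem_cons.1 hb).resolve_left hab.symm⟩)))))

theorem exists_eq_of_pair_sublist {a b : σ} {l : List σ} (h : [a, b] <+ l) :
    ∃ l₁ l₂ l₃, l = l₁ ++ a :: (l₂ ++ b :: l₃) := by
  obtain ⟨r₁, r₂, rfl, ha, hb⟩ := cons_sublist_iff.1 h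
  obtain ⟨l₁, l₂, rfl⟩ := append_of_mem ha
  obtain ⟨m₁, m₂, rfl⟩ := append_of_mem (singleton_sublist.1 hb)
  exact ⟨l₁, l₂ ++ m₁, m₂, by simp⟩

end List

section Words

open List

variable {σ : Type*}

structure SameShortSubwords (u v : List σ) : Prop where
  mem_iff : ∀ x, x ∈ u ↔ x ∈ v
  pair_sublist_iff : ∀ x y, [x, y] <+ u ↔ [x, y] <+ v

namespace SameShortSubwords

theorem refl (u : List σ) : SameShortSubwords u u := ⟨fun _ => .rfl, fun _ _ => .rfl⟩

theorem symm {u v : List σ} (h : SameShortSubwords u v) : SameShortSubwords v u :=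
  ⟨fun x => (h.mem_iff x).symm, fun x y => (h.pair_sublist_iff x y).symm⟩

theorem trans {u v w : List σ} (h : SameShortSubwords u v) (h' : SameShortSubwords v w) :
    SameShortSubwords u w :=
  ⟨fun x => (h.mem_iff x).trans (h'.mem_iff x),
    fun x y => (h.pair_sublist_iff x y).trans (h'.pair_sublist_iff x y)⟩

theorem equivalence : Equivalence (@SameShortSubwords σ) := ⟨refl, symm, trans⟩

theorem count_eq [DecidableEq σ] {u v : List σ} (h : SameShortSubwords u v) {x : σ}
    (hu : u.count x ≤ 2) (hv : v.count x ≤ 2) : u.count x = v.count x := by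
  have h₁ : 1 ≤ u.count x ↔ 1 ≤ v.count x := by
    simpa only [← replicate_sublist_iff, replicate_one, singleton_sublist] using h.mem_iff x
  have h₂ : 2 ≤ u.count x ↔ 2 ≤ v.count x := by
    simpa only [← replicate_sublist_iff, replicate_succ, replicate_zero] using
      h.pair_sublist_iff x x
  omega

theorem perm [DecidableEq σ] {u v : List σ} (h : SameShortSubwords u v)
    (hu : ∀ x, u.count x ≤ 2) (hv : ∀ x, v.count x ≤ 2) : u ~ v :=
  perm_iff_count.2 fun x => h.count_eq (hu x) (hv x)

end SameShortSubwords

/-- The rewriting steps licensed by `xyxzx ≈ xyzx` and `(xy)² ≈ (yx)²`: an occurrence of a letter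
may be erased if the letter also occurs before and after it, and two adjacent letters may be
swapped if both occur again later, or both occurred already earlier. -/
inductive Step : List σ → List σ → Prop
  | erase (P S : List σ) (x : σ) : x ∈ P → x ∈ S → Step (P ++ x :: S) (P ++ S)
  | swap_of_mem_right (P S : List σ) (x y : σ) : x ∈ S → y ∈ S →
      Step (P ++ x :: y :: S) (P ++ y :: x :: S)
  | swap_of_mem_left (P S : List σ) (x y : σ) : x ∈ P → y ∈ P →
      Step (P ++ x :: y :: S) (P ++ y :: x :: S)

theorem Step.sameShortSubwords {u v : List σ} (h : Step u v) : SameShortSubwords u v := by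
  constructor <;> intros <;> cases h <;>
    simp only [mem_append, mem_cons, pair_sublist_append_iff, pair_sublist_cons_iff] <;> grind

theorem SameShortSubwords.of_eqvGen {u v : List σ} (h : Relation.EqvGen Step u v) :
    SameShortSubwords u v :=
  (SameShortSubwords.equivalence.eqvGen_iff).1 <|
    Relation.EqvGen.mono (fun _ _ h => Step.sameShortSubwords h) _ _ h

theorem eqvGen_step_bubble {t : σ} {s : List σ} (p c : List σ)
    (hp : ∀ z ∈ p, (z ∈ c ∧ t ∈ c) ∨ (z ∈ s ∧ t ∈ s)) :
    Relation.EqvGen Step (c ++ (p ++ t :: s)) (c ++ t :: (p ++ s)) := by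
  induction p generalizing c with
  | nil => exact .refl _
  | cons z p ih =>
    have hbubble := ih (c ++ [z]) fun z' hz' =>
      (hp z' (mem_cons_of_mem z hz')).imp_left (And.imp (mem_append_left _) (mem_append_left _))
    have hswap : Step (c ++ z :: t :: (p ++ s)) (c ++ t :: z :: (p ++ s)) := by
      rcases hp z mem_cons_self with ⟨hz, ht⟩ | ⟨hz, ht⟩
      · exact .swap_of_mem_left _ _ _ _ hz ht
      · exact .swap_of_mem_right _ _ _ _ (mem_append_right _ hz) (mem_append_right _ ht)
    simp only [append_assoc, cons_append, nil_append] at hbubble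
    exact .trans _ _ _ hbubble (.rel _ _ hswap)

end Words

section Identities

open List

variable {M : Type*} [Monoid M] (h₁ : ∀ x y z : M, x * y * x * z * x = x * y * z * x)
  (h₂ : ∀ x y : M, (x * y) ^ 2 = (y * x) ^ 2)
include h₁ h₂

theorem mul_swap_of_later (x y a b : M) : x * y * a * x * b * y = y * x * a * x * b * y :=
  calc x * y * a * x * b * y
      = x * y * x * a * x * b * y := by rw [h₁ x y a]
    _ = x * (y * x * y * (a * x * b) * y) := by rw [h₁ y x]; simp only [mul_assoc]
    _ = (x * y) ^ 2 * a * x * b * y := by simp only [pow_two, mul_assoc]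
    _ = (y * x) ^ 2 * a * x * b * y := by rw [h₂]
    _ = y * x * y * (x * a * x * b) * y := by simp only [pow_two, mul_assoc]
    _ = y * (x * 1 * x * a * x) * b * y := by rw [h₁ y x]; simp only [mul_one, mul_assoc]
    _ = y * x * a * x * b * y := by rw [h₁ x 1 a]; simp only [mul_one, mul_assoc]

theorem mul_swap_of_earlier (x y a b : M) : x * a * y * b * x * y = x * a * y * b * y * x :=
  calc x * a * y * b * x * y
      = x * a * (y * b * y * x * y) := by rw [h₁ y b x]; simp only [mul_assoc]
    _ = x * (a * y * b) * x * y * x * y := by rw [h₁ x (a * y * b) y]; simp only [mul_assoc]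
    _ = x * a * y * b * (x * y) ^ 2 := by simp only [pow_two, mul_assoc]
    _ = x * a * y * b * (y * x) ^ 2 := by rw [h₂]
    _ = x * (a * y * b * y) * x * y * x := by simp only [pow_two, mul_assoc]
    _ = x * a * (y * b * y * 1 * y) * x := by
      rw [h₁ x (a * y * b * y) y]; simp only [mul_one, mul_assoc]
    _ = x * a * y * b * y * x := by rw [h₁ y b 1]; simp only [mul_one, mul_assoc]

variable {σ : Type*}

theorem Step.prod_map_eq {u v : List σ} (h : Step u v) (η : σ → M) :
    (u.map η).prod = (v.map η).prod := by
  cases h with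
  | erase P S x hP hS =>
    obtain ⟨P₁, P₂, rfl⟩ := append_of_mem hP
    obtain ⟨S₁, S₂, rfl⟩ := append_of_mem hS
    simpa only [map_append, map_cons, prod_append, prod_cons, mul_assoc] using
      congrArg (fun m => (P₁.map η).prod * m * (S₂.map η).prod)
        (h₁ (η x) (P₂.map η).prod (S₁.map η).prod)
  | swap_of_mem_right P S x y hx hy =>
    obtain rfl | hxy := eq_or_ne x y
    · rfl
    suffices ∀ x y, [x, y] <+ S →
        ((P ++ x :: y :: S).map η).prod = ((P ++ y :: x :: S).map η).prod by
      rcases pair_sublist_or_pair_sublist hx hy hxy with h | h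
      exacts [this x y h, (this y x h).symm]
    intro x y h
    obtain ⟨S₁, S₂, S₃, rfl⟩ := exists_eq_of_pair_sublist h
    simpa only [map_append, map_cons, prod_append, prod_cons, mul_assoc] using
      congrArg (fun m => (P.map η).prod * m * (S₃.map η).prod)
        (mul_swap_of_later h₁ h₂ (η x) (η y) (S₁.map η).prod (S₂.map η).prod)
  | swap_of_mem_left P S x y hx hy =>
    obtain rfl | hxy := eq_or_ne x y
    · rfl
    suffices ∀ x y, [x, y] <+ P →
        ((P ++ x :: y :: S).map η).prod = ((P ++ y :: x :: S).map η).prod by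
      rcases pair_sublist_or_pair_sublist hx hy hxy with h | h
      exacts [this x y h, (this y x h).symm]
    intro x y h
    obtain ⟨P₁, P₂, P₃, rfl⟩ := exists_eq_of_pair_sublist h
    simpa only [map_append, map_cons, prod_append, prod_cons, mul_assoc] using
      congrArg (fun m => (P₁.map η).prod * m * (S.map η).prod)
        (mul_swap_of_earlier h₁ h₂ (η x) (η y) (P₂.map η).prod (P₃.map η).prod)

theorem prod_map_eq_of_eqvGen {u v : List σ} (h : Relation.EqvGen Step u v) (η : σ → M) :
    (u.map η).prod = (v.map η).prod :=
  (Setoid.ker fun w : List σ => (w.map η).prod).iseqv.eqvGen_iff.1 <|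
    Relation.EqvGen.mono (fun _ _ h => h.prod_map_eq h₁ h₂ η) _ _ h

end Identities

section Combinatorics

open List

variable {σ : Type*} [DecidableEq σ]

theorem exists_eq_append_cons_of_three_le_count {w : List σ} {x : σ} (h : 3 ≤ w.count x) :
    ∃ P S, w = P ++ x :: S ∧ x ∈ P ∧ x ∈ S := by
  rw [← replicate_sublist_iff, replicate_succ, cons_sublist_iff] at h
  obtain ⟨r₁, r₂, rfl, hx, h⟩ := h
  obtain ⟨l₁, l₂, l₃, rfl⟩ := exists_eq_of_pair_sublist h
  exact ⟨r₁ ++ l₁, l₂ ++ x :: l₃, by simp, mem_append_left _ hx, mem_append_cons_self⟩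

theorem exists_eqvGen_step_count_le_two (w : List σ) :
    ∃ w', Relation.EqvGen Step w w' ∧ ∀ x, w'.count x ≤ 2 := by
  induction h : w.length using Nat.strong_induction_on generalizing w with
  | _ n ih =>
  by_cases hw : ∀ x, w.count x ≤ 2
  · exact ⟨w, .refl w, hw⟩
  obtain ⟨x, hx⟩ : ∃ x, 2 < w.count x := by simpa using hw
  obtain ⟨P, S, rfl, hP, hS⟩ := exists_eq_append_cons_of_three_le_count hx
  obtain ⟨w', hw', hc⟩ := ih (P ++ S).length (by simp at h ⊢; omega) (P ++ S) rfl
  exact ⟨w', .trans _ _ _ (.rel _ _ (.erase P S x hP hS)) hw', hc⟩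

theorem bubble_condition {c p s u : List σ} {t z : σ}
    (hu : ∀ x, (c ++ t :: u).count x ≤ 2) (hv : ∀ x, (c ++ (p ++ t :: s)).count x ≤ 2)
    (h : SameShortSubwords (c ++ t :: u) (c ++ (p ++ t :: s)))
    (htp : t ∉ p) (hzp : z ∈ p) (hzu : z ∈ u) :
    (z ∈ c ∧ t ∈ c) ∨ (z ∈ s ∧ t ∈ s) := by
  have hzt : z ≠ t := fun e => htp (e ▸ hzp)
  have h_tz : t ∈ c ∨ z ∈ s := by
    have := (h.pair_sublist_iff t z).1 <| by
      simp only [pair_sublist_append_iff, pair_sublist_cons_iff]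
      grind
    simp only [pair_sublist_append_iff, pair_sublist_cons_iff] at this
    grind
  have h_zt : z ∈ c ∨ t ∈ u := by
    have := (h.pair_sublist_iff z t).2 <| by
      simp only [pair_sublist_append_iff, pair_sublist_cons_iff]
      grind
    simp only [pair_sublist_append_iff, pair_sublist_cons_iff] at this
    grind
  by_cases htc : t ∈ c
  · have htu : t ∉ u := fun htu => by
      have := hu t
      simp only [count_append, count_cons_self] at this
      have := count_pos_iff.2 htc
      have := count_pos_iff.2 htu
      omega
    exact Or.inl ⟨h_zt.resolve_right htu, htc⟩
  · have hzs := h_tz.resolve_left htc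
    have hzc : z ∉ c := fun hzc => by
      have := hv z
      simp only [count_append, count_cons_of_ne hzt.symm] at this
      have := count_pos_iff.2 hzc
      have := count_pos_iff.2 hzp
      have := count_pos_iff.2 hzs
      omega
    have hts : t ∈ s := by
      have := (h.pair_sublist_iff t t).1 <| by
        simp only [pair_sublist_append_iff, pair_sublist_cons_iff]
        grind
      simp only [pair_sublist_append_iff, pair_sublist_cons_iff] at this
      grind
    exact Or.inr ⟨hzs, hts⟩

theorem eqvGen_step_of_sameShortSubwords (c : List σ) {u v : List σ}
    (hu : ∀ x, (c ++ u).count x ≤ 2) (hv : ∀ x, (c ++ v).count x ≤ 2)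
    (h : SameShortSubwords (c ++ u) (c ++ v)) : Relation.EqvGen Step (c ++ u) (c ++ v) := by
  have hperm : u ~ v := (perm_append_left_iff c).1 (h.perm hu hv)
  induction u generalizing c v with
  | nil => rw [← hperm.nil_eq]; exact .refl _
  | cons t u ih =>
    obtain ⟨p, s, rfl, htp⟩ := eq_append_cons_of_mem (hperm.subset mem_cons_self)
    have hbubble := eqvGen_step_bubble p c fun z hz => bubble_condition hu hv h htp hz <|
      (mem_cons.1 (hperm.symm.subset (mem_append_left _ hz))).resolve_left
        fun e => htp (e ▸ hz)
    have hmid : (c ++ [t]) ++ (p ++ s) ~ c ++ (p ++ t :: s) := by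
      simpa using perm_middle.symm.append_left c
    have hrest := ih (c ++ [t]) (v := p ++ s) (by simpa using hu)
      (fun x => hmid.count_eq x ▸ hv x)
      (by simpa using h.trans (.of_eqvGen hbubble))
      (hperm.trans perm_middle).cons_inv
    simp only [append_assoc, cons_append, nil_append] at hrest
    exact .trans _ _ _ hrest hbubble.symm

end Combinatorics

theorem Satisfies.of_injective {M N : Type*} [Monoid M] [Monoid N] {f : M →* N}
    (hf : Function.Injective f) {σ : Type*} {u v : FreeMonoid σ} (h : Satisfies N u v) :
    Satisfies M u v :=
  fun φ => hf (h (f.comp φ))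

theorem Styl.coe_eq_coe_of_stylRel {n : ℕ} {u v : FreeMonoid (Fin n)} (h : StylRel n u v) :
    (u : Styl n) = v :=
  (Con.eq _).2 (ConGen.Rel.of _ _ h)

/-- The elements of `styl_2`: the classes of `ε, 1, 2, 12, 21`, writing `a, b` for `1, 2`. -/
inductive StylTwo : Type
  | one | a | b | ab | ba
  deriving DecidableEq

namespace StylTwo

instance : Fintype StylTwo :=
  ⟨⟨↑[one, a, b, ab, ba], by decide⟩, fun x => by cases x <;> decide⟩

def mul : StylTwo → StylTwo → StylTwo
  | one, m | m, one => m
  | ba, _ | _, ba => ba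
  | a, a => a
  | a, b | a, ab | ab, b => ab
  | b, b => b
  | b, a | b, ab | ab, a | ab, ab => ba

instance : Monoid StylTwo where
  mul := mul
  one := one
  one_mul := by decide
  mul_one := by decide
  mul_assoc := by decide

theorem xyxzx_eq_xyzx (x y z : StylTwo) : x * y * x * z * x = x * y * z * x := by
  decide +revert

theorem mul_sq_comm (x y : StylTwo) : (x * y) ^ 2 = (y * x) ^ 2 := by
  simp only [pow_two]; decide +revert

local notation "A" => ((FreeMonoid.of (0 : Fin 2) : FreeMonoid (Fin 2)) : Styl 2)
local notation "B" => ((FreeMonoid.of (1 : Fin 2) : FreeMonoid (Fin 2)) : Styl 2)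

theorem A_mul_A : A * A = A := Styl.coe_eq_coe_of_stylRel (.idem 0)

theorem B_mul_B : B * B = B := Styl.coe_eq_coe_of_stylRel (.idem 1)

theorem A_mul_B_mul_A : A * (B * A) = B * A := by
  have := Styl.coe_eq_coe_of_stylRel (.knuth₁ (n := 2) 0 0 1 le_rfl zero_lt_one)
  simp only [Con.coe_mul] at this
  rw [← mul_assoc, this, mul_assoc, A_mul_A]

theorem B_mul_A_mul_B : B * (A * B) = B * A := by
  have := Styl.coe_eq_coe_of_stylRel (.knuth₂ (n := 2) 0 1 1 zero_lt_one le_rfl)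
  simp only [Con.coe_mul] at this
  rw [← mul_assoc, this, B_mul_B]

def toStyl : StylTwo → Styl 2
  | one => 1
  | a => A
  | b => B
  | ab => A * B
  | ba => B * A

theorem toStyl_mul (m n : StylTwo) : toStyl (m * n) = toStyl m * toStyl n := by
  have hA (x : Styl 2) : A * (A * x) = A * x := by rw [← mul_assoc, A_mul_A]
  have hB (x : Styl 2) : B * (B * x) = B * x := by rw [← mul_assoc, B_mul_B]
  cases m <;> cases n <;> change toStyl (mul _ _) = _ <;>
    simp only [mul, toStyl, mul_assoc, one_mul, mul_one, A_mul_A, B_mul_B, A_mul_B_mul_A,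
      B_mul_A_mul_B, hA, hB]

theorem stylCon_le_ker : stylCon 2 ≤ Con.ker (FreeMonoid.lift ![a, b]) := by
  refine Con.conGen_le.2 fun u v h => ?_
  cases h <;> simp only [Con.ker_rel, map_mul, FreeMonoid.lift_eval_of] <;> decide +revert

def ofStyl : Styl 2 →* StylTwo := (stylCon 2).lift _ stylCon_le_ker

def mulEquiv : StylTwo ≃* Styl 2 where
  toFun := toStyl
  invFun := ofStyl
  left_inv m := by cases m <;> rfl
  right_inv := by
    suffices (MonoidHom.mk ⟨toStyl, rfl⟩ toStyl_mul).comp ofStyl = MonoidHom.id _ from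
      DFunLike.congr_fun this
    ext x
    fin_cases x <;> rfl
  map_mul' := toStyl_mul

section Detection

open List

variable {σ : Type*} [DecidableEq σ]

theorem prod_map_mulSingle_eq_ba_iff (x y : σ) (l : List σ) :
    ((l.map (Pi.mulSingle y a * Pi.mulSingle x b : σ → StylTwo)).prod = ba ↔ [x, y] <+ l) ∧
      (b * (l.map (Pi.mulSingle y a * Pi.mulSingle x b : σ → StylTwo)).prod = ba ↔ y ∈ l) := by
  induction l with
  | nil => simp only [map_nil, prod_nil, sublist_nil, reduceCtorEq, not_mem_nil, iff_false]; decide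
  | cons c l ih =>
    rw [map_cons, prod_cons, pair_sublist_cons_iff, mem_cons, eq_comm (a := y), ← ih.1, ← ih.2]
    clear ih
    generalize (l.map (Pi.mulSingle y a * Pi.mulSingle x b : σ → StylTwo)).prod = P
    simp only [Pi.mul_apply, Pi.mulSingle_apply]
    obtain rfl | hx := eq_or_ne c x <;> obtain rfl | hy := eq_or_ne c y <;> simp_all <;>
      decide +revert

end Detection

theorem sameShortSubwords_of_satisfies {σ : Type*} {u v : FreeMonoid σ}
    (h : Satisfies StylTwo u v) : SameShortSubwords u.toList v.toList := by
  classical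
  have key (x y : σ) := h (FreeMonoid.lift (Pi.mulSingle y a * Pi.mulSingle x b))
  simp only [FreeMonoid.lift_apply] at key
  refine ⟨fun x => ?_, fun x y => ?_⟩
  · rw [← (prod_map_mulSingle_eq_ba_iff x x _).2, ← (prod_map_mulSingle_eq_ba_iff x x _).2, key]
  · rw [← (prod_map_mulSingle_eq_ba_iff x y _).1, ← (prod_map_mulSingle_eq_ba_iff x y _).1, key]

end StylTwo

theorem satisfies_of_sameShortSubwords {M : Type*} [Monoid M]
    (h₁ : ∀ x y z : M, x * y * x * z * x = x * y * z * x)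
    (h₂ : ∀ x y : M, (x * y) ^ 2 = (y * x) ^ 2) {σ : Type*} {u v : FreeMonoid σ}
    (h : SameShortSubwords u.toList v.toList) : Satisfies M u v := by
  classical
  intro φ
  obtain ⟨u', hu, hu'⟩ := exists_eqvGen_step_count_le_two u.toList
  obtain ⟨v', hv, hv'⟩ := exists_eqvGen_step_count_le_two v.toList
  have huv : Relation.EqvGen Step u' v' := eqvGen_step_of_sameShortSubwords [] hu' hv'
    ((SameShortSubwords.of_eqvGen hu).symm.trans (h.trans (.of_eqvGen hv)))
  rw [← FreeMonoid.lift_restrict φ, FreeMonoid.lift_apply, FreeMonoid.lift_apply]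
  exact prod_map_eq_of_eqvGen h₁ h₂ ((hu.trans _ _ _ huv).trans _ _ _ hv.symm) _

/-- `styl_2` satisfies `xyxzx ≈ xyzx` and `(xy)² ≈ (yx)²`, and every identity it
satisfies holds in every monoid satisfying these two; hence `styl_2` is finitely based. -/
theorem styl_two_finitely_based :
    (∀ x y z : Styl 2, x * y * x * z * x = x * y * z * x) ∧
    (∀ x y : Styl 2, (x * y) ^ 2 = (y * x) ^ 2) ∧
    ∀ (σ : Type*) (u v : FreeMonoid σ), Satisfies (Styl 2) u v →
      ∀ (M : Type*) [Monoid M],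
        (∀ x y z : M, x * y * x * z * x = x * y * z * x) →
        (∀ x y : M, (x * y) ^ 2 = (y * x) ^ 2) → Satisfies M u v := by
  refine ⟨fun x y z => ?_, fun x y => ?_, fun σ u v h M _ h₁ h₂ => ?_⟩
  · apply StylTwo.mulEquiv.symm.injective
    simpa only [map_mul] using StylTwo.xyxzx_eq_xyzx _ _ _
  · apply StylTwo.mulEquiv.symm.injective
    simpa only [map_mul, map_pow] using StylTwo.mul_sq_comm _ _
  · exact satisfies_of_sameShortSubwords h₁ h₂
      (StylTwo.sameShortSubwords_of_satisfies
        (h.of_injective (f := StylTwo.mulEquiv.toMonoidHom) StylTwo.mulEquiv.injective))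
end

section
/- For every n ≥ 3, the word xyx (where x and y are distinct variables) is an isoterm for the equational theory of styl_n: if u is a word over the variable alphabet {x, y} such that styl_n satisfies the identity u ≈ xyx, then u = xyx. -/
/-!
Letters `a < b < c` of `𝒜_n` are `0, 1, 2`. Deleting the letters `≥ 3` and applying the tropical
representation `ρ₃` of `styl_3` turns identities of `styl_n` into identities between `4 × 4`
tropical matrices. The entries of `ρ₃ w` are lengths of longest strictly decreasing subsequences
of `w`, so `ρ₃ w` can only grow when letters are inserted into `w`.

Suppose `styl_n` satisfies `u ≈ xyx`. If `xyx` were not a subword of `u`, then `u = y^p x^q y^r`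
and, the images of `x` and `y` being idempotent, `ρ₃` would place `u` below `yxy`; but under
`x ↦ ca, y ↦ b` some entry of `xyx` exceeds that of `yxy`. If `xyx` were a proper subword of
`u`, then so would be some word `m` of length four containing `xyx`, and under `x ↦ ab, y ↦ abc`
or `x ↦ bc, y ↦ abc` some entry of `m` exceeds that of `xyx`.
-/

open List Tropical

local notation "𝕄" => Matrix (Fin 4) (Fin 4) (Tropical (WithTop ℤ))

section TwoLetterWords

theorem exists_eq_replicate_append_of_not_sublist {w : List (Fin 2)} (h : ¬[1, 0] <+ w) :
    ∃ a q, w = replicate a 0 ++ replicate q 1 := by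
  induction w with
  | nil => exact ⟨0, 0, rfl⟩
  | cons l t ih =>
    obtain ⟨a, q, rfl⟩ := ih fun hs => h (hs.cons l)
    fin_cases l
    · exact ⟨a + 1, q, rfl⟩
    · have ha : a = 0 := by
        by_contra ha
        exact h (.cons_cons 1 (singleton_sublist.2 (by simp [ha])))
      exact ⟨0, q + 1, by simp [ha, replicate_succ]⟩

theorem exists_eq_replicate_append_append_of_not_sublist {w : List (Fin 2)}
    (h : ¬[0, 1, 0] <+ w) : ∃ p a q, w = replicate p 1 ++ replicate a 0 ++ replicate q 1 := by
  induction w with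
  | nil => exact ⟨0, 0, 0, rfl⟩
  | cons l t ih =>
    fin_cases l
    · obtain ⟨a, q, rfl⟩ := exists_eq_replicate_append_of_not_sublist fun hs => h (hs.cons_cons 0)
      exact ⟨0, a + 1, q, rfl⟩
    · obtain ⟨p, a, q, rfl⟩ := ih fun hs => h (hs.cons 1)
      exact ⟨p + 1, a, q, rfl⟩

theorem List.Sublist.exists_sublist_length_succ {α : Type*} {s t : List α} (h : s <+ t)
    (hne : s ≠ t) : ∃ m, s <+ m ∧ m <+ t ∧ m.length = s.length + 1 := by
  induction h with
  | slnil => exact absurd rfl hne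
  | @cons s t x hst ih =>
    by_cases hs : s = t
    · subst hs
      exact ⟨x :: s, sublist_cons_self x s, .refl _, rfl⟩
    · obtain ⟨m, hsm, hmt, hlen⟩ := ih hs
      exact ⟨m, hsm, hmt.cons x, hlen⟩
  | @cons_cons s t x _ ih =>
    obtain ⟨m, hsm, hmt, hlen⟩ := ih fun hs => hne (hs ▸ rfl)
    exact ⟨x :: m, hsm.cons_cons x, hmt.cons_cons x, by simp [hlen]⟩

theorem exists_length_four_of_sublist {w : List (Fin 2)} (h : [0, 1, 0] <+ w)
    (hne : w ≠ [0, 1, 0]) : ∃ a b c d : Fin 2, [0, 1, 0] <+ [a, b, c, d] ∧ [a, b, c, d] <+ w := by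
  obtain ⟨m, hm, hmw, hlen⟩ := h.exists_sublist_length_succ hne.symm
  match m, hlen with
  | [a, b, c, d], _ => exact ⟨a, b, c, d, hm, hmw⟩

end TwoLetterWords

section IdempotentSemiring

variable {M : Type*} [Semiring M] {X Y : M}

/- With `1 + 1 = 1`, `A + B = A` is the order `A ≤ B`: products only decrease when factors
below `1` are inserted. -/
theorem prod_add_prod_of_sublist (h1 : (1 : M) + 1 = 1) {s t : List M} (hst : s <+ t)
    (ht : ∀ x ∈ t, x + 1 = x) : t.prod + s.prod = t.prod := by
  induction hst with
  | slnil => simpa using h1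
  | @cons s t x _ ih =>
    have hx : x * t.prod + t.prod = x * t.prod := by
      simpa [add_mul] using congrArg (· * t.prod) (ht x (by simp))
    rw [List.prod_cons, ← hx, add_assoc, ih fun y hy => ht y (by simp [hy])]
  | @cons_cons s t x _ ih =>
    rw [List.prod_cons, List.prod_cons, ← mul_add, ih fun y hy => ht y (by simp [hy])]

def evalPair (X Y : M) (w : List (Fin 2)) : M := (w.map ![X, Y]).prod

theorem evalPair_add_evalPair_of_sublist (h1 : (1 : M) + 1 = 1) (hX : X + 1 = X)
    (hY : Y + 1 = Y) {s t : List (Fin 2)} (hst : s <+ t) :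
    evalPair X Y t + evalPair X Y s = evalPair X Y t :=
  prod_add_prod_of_sublist h1 (hst.map _) fun x hx => by
    obtain ⟨l, -, rfl⟩ := List.mem_map.1 hx
    fin_cases l <;> assumption

theorem evalPair_add_of_not_sublist (h1 : (1 : M) + 1 = 1) (hX : X + 1 = X) (hY : Y + 1 = Y)
    (hXi : IsIdempotentElem X) (hYi : IsIdempotentElem Y) {w : List (Fin 2)}
    (hw : ¬[0, 1, 0] <+ w) : Y * X * Y + evalPair X Y w = Y * X * Y := by
  obtain ⟨p, a, q, rfl⟩ := exists_eq_replicate_append_append_of_not_sublist hw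
  have hsub : replicate p 1 ++ replicate a 0 ++ replicate q 1 <+
      replicate (p + 1) (1 : Fin 2) ++ replicate (a + 1) 0 ++ replicate (q + 1) 1 := by
    gcongr <;> exact (replicate_sublist_replicate _).2 (by omega)
  have := evalPair_add_evalPair_of_sublist h1 hX hY hsub
  simpa [evalPair, prod_replicate, hXi.pow_succ_eq, hYi.pow_succ_eq, mul_assoc] using this

theorem sublist_of_evalPair_eq {w : List (Fin 2)} (hw : evalPair X Y w = X * Y * X)
    (h1 : (1 : M) + 1 = 1) (hX : X + 1 = X) (hY : Y + 1 = Y) (hXi : IsIdempotentElem X)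
    (hYi : IsIdempotentElem Y) (hsep : Y * X * Y + X * Y * X ≠ Y * X * Y) : [0, 1, 0] <+ w := by
  by_contra h010
  exact hsep (hw ▸ evalPair_add_of_not_sublist h1 hX hY hXi hYi h010)

theorem add_evalPair_eq_of_sublist {w m : List (Fin 2)} (hw : evalPair X Y w = X * Y * X)
    (hmw : m <+ w) (h1 : (1 : M) + 1 = 1) (hX : X + 1 = X) (hY : Y + 1 = Y) :
    X * Y * X + evalPair X Y m = X * Y * X :=
  hw ▸ evalPair_add_evalPair_of_sublist h1 hX hY hmw

end IdempotentSemiring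
/- `ρ₃` of the letter `k` (the condition is `i ≤ bar k < j`) with its entries negated, so that
max-plus becomes the min-plus `Tropical`; for `k ≥ 3` it is the identity, deleting the letter. -/
def stylLetterMat (k : ℕ) : 𝕄 :=
  Matrix.of fun i j =>
    if i = j then 1 else if i.val + k ≤ 2 ∧ 2 < j.val + k then trop ((-1 : ℤ) : WithTop ℤ) else 0

theorem stylLetterMat_of_three_le {k : ℕ} (hk : 3 ≤ k) : stylLetterMat k = 1 := by
  ext i j
  simp only [stylLetterMat, Matrix.of_apply, Matrix.one_apply]
  split_ifs <;> first | rfl | omega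

theorem stylLetterMat_knuth₁ {a b c : ℕ} (hab : a ≤ b) (hbc : b < c) :
    stylLetterMat a * stylLetterMat c * stylLetterMat b =
      stylLetterMat c * stylLetterMat a * stylLetterMat b := by
  rcases lt_or_ge c 3 with hc | hc
  · have key : ∀ a b c : Fin 3, a ≤ b → b < c →
        stylLetterMat a * stylLetterMat c * stylLetterMat b =
          stylLetterMat c * stylLetterMat a * stylLetterMat b := by decide
    exact key ⟨a, by omega⟩ ⟨b, by omega⟩ ⟨c, hc⟩ hab hbc
  · simp [stylLetterMat_of_three_le hc]

theorem stylLetterMat_knuth₂ {a b c : ℕ} (hab : a < b) (hbc : b ≤ c) :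
    stylLetterMat b * stylLetterMat a * stylLetterMat c =
      stylLetterMat b * stylLetterMat c * stylLetterMat a := by
  rcases lt_or_ge c 3 with hc | hc
  · have key : ∀ a b c : Fin 3, a < b → b ≤ c →
        stylLetterMat b * stylLetterMat a * stylLetterMat c =
          stylLetterMat b * stylLetterMat c * stylLetterMat a := by decide
    exact key ⟨a, by omega⟩ ⟨b, by omega⟩ ⟨c, hc⟩ hab hbc
  · simp [stylLetterMat_of_three_le hc]

theorem isIdempotentElem_stylLetterMat (a : ℕ) : IsIdempotentElem (stylLetterMat a) := by
  rcases lt_or_ge a 3 with ha | ha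
  · have key : ∀ a : Fin 3, stylLetterMat a * stylLetterMat a = stylLetterMat a := by decide
    exact key ⟨a, ha⟩
  · simp [stylLetterMat_of_three_le ha, IsIdempotentElem]

def stylRep (n : ℕ) : FreeMonoid (Fin n) →* 𝕄 := FreeMonoid.lift fun a => stylLetterMat a

@[simp]
theorem stylRep_of {n : ℕ} (a : Fin n) : stylRep n (.of a) = stylLetterMat a := rfl

theorem stylCon_le_ker_stylRep (n : ℕ) : stylCon n ≤ Con.ker (stylRep n) := by
  refine Con.conGen_le.2 fun _ _ hr => ?_
  cases hr with
  | knuth₁ a b c hab hbc => simpa using stylLetterMat_knuth₁ (Fin.le_def.1 hab) hbc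
  | knuth₂ a b c hab hbc => simpa using stylLetterMat_knuth₂ hab (Fin.le_def.1 hbc)
  | idem a => simpa using (isIdempotentElem_stylLetterMat a).eq

theorem Satisfies.lift_comp {M N σ : Type*} [Monoid M] [Monoid N] {u v : FreeMonoid σ}
    (h : Satisfies M u v) (ψ : M →* N) (f : σ → M) :
    FreeMonoid.lift (ψ ∘ f) u = FreeMonoid.lift (ψ ∘ f) v := by
  rw [← FreeMonoid.comp_lift]
  exact congrArg ψ (h (FreeMonoid.lift f))

theorem evalPair_stylRep_eq_of_satisfies {n : ℕ} {u : FreeMonoid (Fin 2)}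
    (h : Satisfies (Styl n) u (.of 0 * .of 1 * .of 0)) (v w : FreeMonoid (Fin n)) :
    evalPair (stylRep n v) (stylRep n w) u.toList =
      stylRep n v * stylRep n w * stylRep n v := by
  have key := h.lift_comp ((stylCon n).lift (stylRep n) (stylCon_le_ker_stylRep n))
    ![(stylCon n).mk' v, (stylCon n).mk' w]
  have hf : (stylCon n).lift (stylRep n) (stylCon_le_ker_stylRep n) ∘
      ![(stylCon n).mk' v, (stylCon n).mk' w] = ![stylRep n v, stylRep n w] := by
    ext l : 1
    fin_cases l <;> rfl
  rw [hf, FreeMonoid.lift_apply] at key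
  simpa [evalPair, mul_assoc] using key

/-- For `n ≥ 3`, the word `xyx` is an isoterm for `styl_n`: any word `u` over the
two variables `x = 0`, `y = 1` such that `styl_n` satisfies `u ≈ xyx` equals `xyx`. -/
theorem xyx_isoterm (n : ℕ) (hn : 3 ≤ n) (u : FreeMonoid (Fin 2))
    (h : Satisfies (Styl n) u (.of 0 * .of 1 * .of 0)) :
    u = .of 0 * .of 1 * .of 0 := by
  have hsubst := fun v w : FreeMonoid (Fin n) => evalPair_stylRep_eq_of_satisfies h v w
  have hA := hsubst (.of ⟨2, by omega⟩ * .of ⟨0, by omega⟩) (.of ⟨1, by omega⟩)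
  have hB := hsubst (.of ⟨0, by omega⟩ * .of ⟨1, by omega⟩)
    (.of ⟨0, by omega⟩ * .of ⟨1, by omega⟩ * .of ⟨2, by omega⟩)
  have hC := hsubst (.of ⟨1, by omega⟩ * .of ⟨2, by omega⟩)
    (.of ⟨0, by omega⟩ * .of ⟨1, by omega⟩ * .of ⟨2, by omega⟩)
  simp only [map_mul, stylRep_of] at hA hB hC
  have h1 : (1 : 𝕄) + 1 = 1 := by decide
  have h010 := sublist_of_evalPair_eq hA h1 (by decide) (by decide)
    (by unfold IsIdempotentElem; decide) (isIdempotentElem_stylLetterMat 1) (by decide)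
  apply FreeMonoid.toList.injective
  by_contra hne
  obtain ⟨a, b, c, d, hpat, hsub⟩ := exists_length_four_of_sublist h010 hne
  have hB' := add_evalPair_eq_of_sublist hB hsub h1 (by decide) (by decide)
  have hC' := add_evalPair_eq_of_sublist hC hsub h1 (by decide) (by decide)
  clear hsub
  revert a b c d
  decide
end

section
/- For every n ∈ ℕ, the stylic monoid styl_{n+2} does not satisfy the identity (xy)^{n+1} ≈ (xy)^n yx: there exists a monoid homomorphism φ from the free monoid on two variables x, y into styl_{n+2} such that φ((xy)^{n+1}) ≠ φ((xy)^n yx). -/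
/-!
The length of a longest strictly decreasing subsequence is a stylic invariant: it is preserved by
Knuth moves (the first case of Greene's theorem) and by doubling a letter. It is computed by reading
a word from right to left, and the defining relations of the stylic monoid already hold for this
reading process. Under `x ↦ 1`, `y ↦ 2 3 ⋯ (n+2)` the word `(xy)^{n+1}` consists of `n + 1`
increasing runs, so that length is `n + 1`, whereas in `(xy)^n yx` one can take `n+2, n+1, …, 2`
from the successive runs and end with the final `1`, getting `n + 2`.
-/

open FreeMonoid

section
variable {m : ℕ}

/-- Words are read from right to left; the state assigns to each threshold `t` the length of a
longest strictly decreasing subsequence of the suffix read so far whose letters `a` satisfy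
`a.castSucc < t`. -/
def ldsStep (a : Fin m) (g : Fin (m + 1) →o ℕ) : Fin (m + 1) →o ℕ where
  toFun t := if a.castSucc < t then max (g t) (g a.castSucc + 1) else g t
  monotone' s t hst := by
    have := g.monotone hst
    dsimp only
    split_ifs <;> omega

lemma ldsStep_apply (a : Fin m) (g : Fin (m + 1) →o ℕ) (t : Fin (m + 1)) :
    ldsStep a g t = if a.castSucc < t then max (g t) (g a.castSucc + 1) else g t := rfl

lemma ldsStep_idem (a : Fin m) (g : Fin (m + 1) →o ℕ) :
    ldsStep a (ldsStep a g) = ldsStep a g := by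
  ext t
  simp only [ldsStep_apply, Fin.lt_def, Fin.val_castSucc]
  split_ifs <;> omega

lemma ldsStep_knuth₁ {a b c : Fin m} (hab : a ≤ b) (hbc : b < c) (g : Fin (m + 1) →o ℕ) :
    ldsStep a (ldsStep c (ldsStep b g)) = ldsStep c (ldsStep a (ldsStep b g)) := by
  have := g.monotone (Fin.castSucc_le_castSucc_iff.mpr hab)
  ext t
  simp only [ldsStep_apply, Fin.lt_def, Fin.val_castSucc]
  split_ifs <;> omega

lemma ldsStep_knuth₂ {a b c : Fin m} (hab : a < b) (hbc : b ≤ c) (g : Fin (m + 1) →o ℕ) :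
    ldsStep b (ldsStep a (ldsStep c g)) = ldsStep b (ldsStep c (ldsStep a g)) := by
  ext t
  simp only [ldsStep_apply, Fin.lt_def, Fin.val_castSucc]
  split_ifs <;> omega

def ldsRep : FreeMonoid (Fin m) →* Function.End (Fin (m + 1) →o ℕ) := lift ldsStep

lemma ldsRep_mul_apply (u v : FreeMonoid (Fin m)) (g : Fin (m + 1) →o ℕ) :
    ldsRep (u * v) g = ldsRep u (ldsRep v g) := by
  rw [map_mul]
  rfl

lemma ldsRep_of_apply (a : Fin m) (g : Fin (m + 1) →o ℕ) : ldsRep (of a) g = ldsStep a g := rfl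

lemma stylCon_le_ker_ldsRep : stylCon m ≤ Con.ker ldsRep := by
  refine Con.conGen_le.mpr fun u v huv => ?_
  rw [Con.ker_rel]
  funext g
  cases huv with
  | knuth₁ a b c hab hbc =>
    simp only [ldsRep_mul_apply, ldsRep_of_apply, ldsStep_knuth₁ hab hbc]
  | knuth₂ a b c hab hbc =>
    simp only [ldsRep_mul_apply, ldsRep_of_apply, ldsStep_knuth₂ hab hbc]
  | idem a => simp only [ldsRep_mul_apply, ldsRep_of_apply, ldsStep_idem]

lemma ldsRep_eq_of_stylCon {u v : FreeMonoid (Fin m)} (h : stylCon m u v) :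
    ldsRep u = ldsRep v :=
  (Con.ker_rel _).mp (stylCon_le_ker_ldsRep h)

/-- The state of `(0 1 ⋯ (m-1))^r`. -/
def cappedIndex (r : ℕ) : Fin (m + 1) →o ℕ where
  toFun t := min r t
  monotone' s t hst := by
    have : (s : ℕ) ≤ t := hst
    dsimp only
    omega

lemma cappedIndex_apply (r : ℕ) (t : Fin (m + 1)) : cappedIndex r t = min r t := rfl

lemma ldsRep_drop_finRange_apply (r k : ℕ) (t : Fin (m + 1)) :
    ldsRep (ofList ((List.finRange m).drop k)) (cappedIndex r) t =
      if (t : ℕ) ≤ k then min r t else min (r + 1) t := by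
  induction h : m - k generalizing k t with
  | zero =>
    rw [List.drop_eq_nil_of_le (by simp; omega), ofList_nil, map_one, Function.End.one_def, id,
      cappedIndex_apply]
    split_ifs <;> omega
  | succ d ih =>
    rw [List.drop_eq_getElem_cons (by simp; omega), ofList_cons, ldsRep_mul_apply,
      ldsRep_of_apply, ldsStep_apply, ih (k + 1) _ (by omega), ih (k + 1) _ (by omega)]
    simp only [List.getElem_finRange, Fin.lt_def, Fin.val_castSucc, Fin.val_cast]
    split_ifs <;> omega

lemma ldsRep_drop_finRange {r k : ℕ} (hkr : k ≤ r) :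
    ldsRep (ofList ((List.finRange m).drop k)) (cappedIndex r) = cappedIndex (r + 1) := by
  ext t
  rw [ldsRep_drop_finRange_apply, cappedIndex_apply]
  split_ifs <;> omega

lemma ldsRep_finRange_pow (r s : ℕ) :
    ldsRep (ofList (List.finRange m) ^ r) (cappedIndex s) = cappedIndex (r + s) := by
  induction r with
  | zero =>
    rw [pow_zero, map_one, zero_add]
    rfl
  | succ r ih =>
    have hstep := ldsRep_drop_finRange (m := m) (Nat.zero_le (r + s))
    rw [List.drop_zero] at hstep
    rw [pow_succ', ldsRep_mul_apply, ih, hstep, Nat.succ_add]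

lemma ldsStep_zero_cappedIndex_zero :
    ldsStep (0 : Fin (m + 1)) (cappedIndex 0) = cappedIndex 1 := by
  ext t
  simp only [ldsStep_apply, cappedIndex_apply, Fin.lt_def, Fin.val_castSucc, Fin.val_zero]
  split_ifs <;> omega

end

/-- `styl_{n+2}` does not satisfy the identity `(xy)^{n+1} ≈ (xy)^n yx`. -/
theorem styl_not_satisfies_rps_identity (n : ℕ) :
    ∃ φ : FreeMonoid (Fin 2) →* Styl (n + 2),
      φ ((FreeMonoid.of 0 * FreeMonoid.of 1) ^ (n + 1)) ≠
      φ ((FreeMonoid.of 0 * FreeMonoid.of 1) ^ n * (FreeMonoid.of 1 * FreeMonoid.of 0)) := by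
  set y : FreeMonoid (Fin (n + 2)) := ofList ((List.finRange (n + 2)).drop 1) with hy_def
  set φ₀ : FreeMonoid (Fin 2) →* FreeMonoid (Fin (n + 2)) := lift ![of 0, y]
  have hx : φ₀ (of 0) = of 0 := lift_eval_of _ _
  have hy : φ₀ (of 1) = y := lift_eval_of _ _
  have hxy : φ₀ (of 0 * of 1) = ofList (List.finRange (n + 2)) := by
    rw [map_mul, hx, hy, hy_def, List.drop_one, List.finRange_succ, List.tail_cons, ofList_cons]
  have hu : ldsRep (φ₀ ((of 0 * of 1) ^ (n + 1))) (cappedIndex 0) = cappedIndex (n + 1) := by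
    rw [map_pow, hxy, ldsRep_finRange_pow]
  have hv : ldsRep (φ₀ ((of 0 * of 1) ^ n * (of 1 * of 0))) (cappedIndex 0) =
      cappedIndex (n + 2) := by
    rw [map_mul φ₀, map_pow, hxy, map_mul φ₀, hy, hx, ldsRep_mul_apply, ldsRep_mul_apply,
      ldsRep_of_apply, ldsStep_zero_cappedIndex_zero, ldsRep_drop_finRange le_rfl,
      ldsRep_finRange_pow]
  refine ⟨(stylCon (n + 2)).mk'.comp φ₀, fun h => ?_⟩
  have hstates := congrFun (ldsRep_eq_of_stylCon ((Con.eq _).mp h)) (cappedIndex 0)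
  rw [hu, hv] at hstates
  simpa [cappedIndex_apply] using DFunLike.congr_fun hstates (Fin.last _)
end

section
/- Let n ≥ 1. For every word w over 𝒜_n, ρ_n(w^*) = (ρ_n(w))^⋆, where w^* is the word obtained by reversing w and replacing each letter a by n+1−a, and ⋆ is the skew transposition on (n+1)×(n+1) tropical matrices. Consequently, the faithful representation ϱ_n : styl_n → U_{n+1}(𝕋) intertwines the involution * on styl_n induced by the order-reversing permutation of 𝒜_n with the skew transposition ⋆ on U_{n+1}(𝕋). -/
namespace WithBot

variable {α ι : Type*} [LinearOrder α] [Add α]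

lemma add_finset_sup [AddLeftMono α] (s : Finset ι) (f : ι → WithBot α) (c : WithBot α) :
    c + s.sup f = s.sup fun k => c + f k :=
  Finset.apply_sup_eq_sup_comp_of_linearOrder (c + ·) (fun _ _ h => add_le_add_right h c)
    (add_bot c)

lemma finset_sup_add [AddRightMono α] (s : Finset ι) (f : ι → WithBot α) (c : WithBot α) :
    s.sup f + c = s.sup fun k => f k + c :=
  Finset.apply_sup_eq_sup_comp_of_linearOrder (· + c) (fun _ _ h => add_le_add_left h c)
    (bot_add c)

end WithBot

section TropicalMatrix

variable {m : ℕ}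

lemma tmul_assoc (A B C : Matrix (Fin m) (Fin m) Trop) :
    tmul (tmul A B) C = tmul A (tmul B C) := by
  funext i j
  simp only [tmul, WithBot.finset_sup_add, WithBot.add_finset_sup, add_assoc]
  exact Finset.sup_comm _ _ _

lemma tropId_tmul (A : Matrix (Fin m) (Fin m) Trop) : tmul (tropId m) A = A := by
  funext i j
  refine le_antisymm (Finset.sup_le fun k _ => ?_) ?_
  · by_cases h : i = k <;> simp [tropId, h]
  · exact Finset.le_sup_of_le (Finset.mem_univ i) (by simp [tropId])

lemma tmul_tropId (A : Matrix (Fin m) (Fin m) Trop) : tmul A (tropId m) = A := by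
  funext i j
  refine le_antisymm (Finset.sup_le fun k _ => ?_) ?_
  · by_cases h : k = j <;> simp [tropId, h]
  · exact Finset.le_sup_of_le (Finset.mem_univ j) (by simp [tropId])

lemma skewT_apply (A : Matrix (Fin (m + 1)) (Fin (m + 1)) Trop) (i j : Fin (m + 1)) :
    skewT A i j = A j.rev i.rev := by
  simp only [skewT]
  congr 1 <;> ext <;> simp

lemma skewT_tropId : skewT (tropId (m + 1)) = tropId (m + 1) := by
  funext i j
  simp [skewT_apply, tropId, Fin.rev_inj, eq_comm]

lemma skewT_tmul (A B : Matrix (Fin (m + 1)) (Fin (m + 1)) Trop) :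
    skewT (tmul A B) = tmul (skewT B) (skewT A) := by
  funext i j
  simp only [skewT_apply, tmul]
  conv_rhs => rw [← Finset.map_univ_equiv Fin.revPerm, Finset.sup_map]
  simp only [Function.comp_def, Equiv.coe_toEmbedding, Fin.revPerm_apply, Fin.rev_rev, add_comm]

end TropicalMatrix

lemma rhoList_append {n : ℕ} (u v : List (Fin n)) :
    rhoList (u ++ v) = tmul (rhoList u) (rhoList v) := by
  induction u with
  | nil => exact (tropId_tmul _).symm
  | cons x xs ih => simp only [List.cons_append, rhoList, ih, tmul_assoc]

lemma rhoList_singleton {n : ℕ} (x : Fin n) : rhoList [x] = letterMat x :=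
  tmul_tropId _

lemma skewT_letterMat {n : ℕ} (x : Fin n) : skewT (letterMat x) = letterMat x.rev := by
  funext i j
  have hcut : (j.rev ≤ bar x ∧ bar x < i.rev) ↔ (i ≤ bar x.rev ∧ bar x.rev < j) := by
    simp only [Fin.le_def, Fin.lt_def, Fin.val_rev, bar]
    omega
  simp only [skewT_apply, letterMat, Fin.rev_inj, eq_comm (a := j), hcut]

lemma wordStar_cons {n : ℕ} (x : Fin n) (xs : List (Fin n)) :
    wordStar (x :: xs) = wordStar xs ++ [x.rev] := by
  simp only [wordStar, List.reverse_cons, List.map_append, List.map_singleton]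
  congr 2
  ext
  simp only [Fin.val_rev]
  omega

theorem rho_wordStar_eq_skewT_general (n : ℕ) (w : List (Fin n)) :
    rhoList (wordStar w) = skewT (rhoList w) := by
  induction w with
  | nil => exact skewT_tropId.symm
  | cons x xs ih =>
    rw [wordStar_cons, rhoList_append, ih, rhoList_singleton, rhoList, skewT_tmul,
      skewT_letterMat]

/-- `ρ_n(w^*) = (ρ_n(w))^⋆`: the representation intertwines the involution on
words (reverse and complement letters) with skew transposition of tropical matrices. -/
theorem rho_wordStar_eq_skewT (n : ℕ) (hn : 1 ≤ n) (w : List (Fin n)) :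
    rhoList (wordStar w) = skewT (rhoList w) :=
  rho_wordStar_eq_skewT_general n w
end

section
/- For every n ≥ 2 and every word w over 𝒜_n, the relation w^* w^{n−1} ≡_styl w^* w^n holds, where w^* is the word obtained by reversing w and replacing each letter a by n+1−a. In other words, the stylic monoid with involution (styl_n, *) satisfies the involution identity x^* x^{n−1} ≈ x^* x^n. -/
/-!
Read a strictly decreasing word as a column and insert letters into it one at a time: `a`
replaces the largest letter `p ≤ a` of the column `d`, or goes to the bottom if there is none.
Knuth moves of the second kind carry `a` up to `p`, those of the first kind then carry `p` to the
front (when `p = a`, use `aa = a` instead), so `d·a ≡ p·d'` for the new column `d'`. Hence every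
word `u` is congruent to `z · column u` for some `z`, and since a column absorbs its own letters
on the right, `u·v ≡ u` as soon as every letter of `v` lies in `column u`.

For `u = w^* w^{n-1}`, each copy of `w` brings the next largest letter of `supp w` into the
column, and a letter stays there as long as all larger letters of `supp w` do. So after `n - 1`
copies the whole support is in, unless `supp w` is the full alphabet; then `w^*` contains every
letter as well and provides the missing pass.
-/
section Column

open Finset

variable {α : Type*} [LinearOrder α]

def colInsert : List α → α → List α
  | [], a => [a]
  | u :: d, a => if u ≤ a then a :: d else u :: colInsert d a

def column (u : List α) : List α := u.foldl colInsert []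

theorem colInsert_of_forall_lt {d : List α} {a : α} (h : ∀ u ∈ d, a < u) :
    colInsert d a = d ++ [a] := by
  induction d with
  | nil => rfl
  | cons u d ih =>
    rw [List.forall_mem_cons] at h
    simp [colInsert, not_le.2 h.1, ih h.2]

theorem colInsert_append_cons {U L : List α} {p a : α} (hU : ∀ u ∈ U, a < u) (hp : p ≤ a) :
    colInsert (U ++ p :: L) a = U ++ a :: L := by
  induction U with
  | nil => simp [colInsert, hp]
  | cons u U ih =>
    rw [List.forall_mem_cons] at hU
    simp [colInsert, not_le.2 hU.1, ih hU.2]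

theorem forall_lt_or_eq_append_cons (d : List α) (a : α) :
    (∀ u ∈ d, a < u) ∨ ∃ U p L, d = U ++ p :: L ∧ (∀ u ∈ U, a < u) ∧ p ≤ a := by
  induction d with
  | nil => simp
  | cons u d ih =>
    rcases le_or_gt u a with hua | hau
    · exact .inr ⟨[], u, d, rfl, by simp, hua⟩
    · rcases ih with h | ⟨U, p, L, rfl, hU, hp⟩
      · exact .inl (List.forall_mem_cons.2 ⟨hau, h⟩)
      · exact .inr ⟨u :: U, p, L, rfl, List.forall_mem_cons.2 ⟨hau, hU⟩, hp⟩

theorem mem_of_mem_colInsert {d : List α} {a x : α} (h : x ∈ colInsert d a) : x = a ∨ x ∈ d := by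
  induction d with
  | nil => simpa [colInsert] using h
  | cons u d ih =>
    unfold colInsert at h
    split_ifs at h <;> grind

theorem mem_colInsert_self (d : List α) (a : α) : a ∈ colInsert d a := by
  induction d with
  | nil => simp [colInsert]
  | cons u d ih =>
    unfold colInsert
    split_ifs <;> simp [ih]

theorem pairwise_colInsert {d : List α} (hd : d.Pairwise (· > ·)) (a : α) :
    (colInsert d a).Pairwise (· > ·) := by
  induction d with
  | nil => simp [colInsert]
  | cons u d ih =>
    rw [List.pairwise_cons] at hd
    unfold colInsert
    split_ifs with hua
    · exact List.pairwise_cons.2 ⟨fun x hx => (hd.1 x hx).trans_le hua, hd.2⟩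
    · refine List.pairwise_cons.2 ⟨fun x hx => ?_, ih hd.2⟩
      rcases mem_of_mem_colInsert hx with rfl | hx
      exacts [not_le.1 hua, hd.1 x hx]

theorem pairwise_foldl_colInsert {d : List α} (hd : d.Pairwise (· > ·)) (v : List α) :
    (v.foldl colInsert d).Pairwise (· > ·) := by
  induction v generalizing d with
  | nil => exact hd
  | cons a v ih => exact ih (pairwise_colInsert hd a)

theorem mem_colInsert_of_mem {d : List α} (hd : d.Pairwise (· > ·)) {x b : α} (hx : x ∈ d)
    (hb : b ≤ x ∨ b ∈ d) : x ∈ colInsert d b := by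
  induction d with
  | nil => simp at hx
  | cons u d ih =>
    rw [List.pairwise_cons] at hd
    unfold colInsert
    split_ifs <;> grind

theorem mem_foldl_colInsert {S T : Set α} (hT : ∀ x ∈ T, ∀ y ∈ S, x < y → y ∈ T)
    {d v : List α} (hd : d.Pairwise (· > ·)) (hv : ∀ b ∈ v, b ∈ S) (hTd : ∀ x ∈ T, x ∈ d) :
    ∀ x ∈ T, x ∈ v.foldl colInsert d := by
  induction v generalizing d with
  | nil => exact hTd
  | cons b v ih =>
    rw [List.forall_mem_cons] at hv
    refine ih (pairwise_colInsert hd b) hv.2 fun x hx => mem_colInsert_of_mem hd (hTd x hx) ?_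
    rcases le_or_gt b x with hbx | hxb
    exacts [.inl hbx, .inr (hTd b (hT x hx b hv.1 hxb))]

theorem card_filter_lt_lt_of_lt {S : Finset α} {x y : α} (hy : y ∈ S) (hxy : x < y) :
    #{z ∈ S | y < z} < #{z ∈ S | x < z} :=
  card_lt_card <| (ssubset_iff_of_subset (monotone_filter_right _ fun _ _ => hxy.trans)).2
    ⟨y, by simp [hy, hxy], by simp⟩

theorem card_filter_lt_lt_card {S : Finset α} {x : α} (hx : x ∈ S) : #{z ∈ S | x < z} < #S :=
  card_lt_card <| filter_ssubset.2 ⟨x, hx, lt_irrefl x⟩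

def ContainsTop (S : Finset α) (k : ℕ) (d : List α) : Prop :=
  ∀ x ∈ S, #{y ∈ S | x < y} < k → x ∈ d

theorem containsTop_zero (S : Finset α) (d : List α) : ContainsTop S 0 d :=
  fun _ _ h => absurd h (Nat.not_lt_zero _)

variable {S : Finset α} {k : ℕ} {d v : List α}

theorem ContainsTop.foldl_colInsert (hd : d.Pairwise (· > ·)) (hv : ∀ b ∈ v, b ∈ S)
    (h : ContainsTop S k d) : ContainsTop S k (v.foldl colInsert d) :=
  fun x hx hxk => mem_foldl_colInsert (S := ↑S) (T := {x | x ∈ S ∧ #{y ∈ S | x < y} < k})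
    (fun _ hx _ hy hxy => ⟨hy, (card_filter_lt_lt_of_lt hy hxy).trans hx.2⟩) hd hv
    (fun x hx => h x hx.1 hx.2) x ⟨hx, hxk⟩

theorem ContainsTop.foldl_colInsert_succ (hd : d.Pairwise (· > ·)) (hv : ∀ b ∈ v, b ∈ S)
    (hSv : ∀ s ∈ S, s ∈ v) (h : ContainsTop S k d) :
    ContainsTop S (k + 1) (v.foldl colInsert d) := by
  intro x hx hxk
  rcases Nat.lt_succ_iff_lt_or_eq.1 hxk with hxk | hxk
  · exact h.foldl_colInsert hd hv x hx hxk
  obtain ⟨v₁, v₂, rfl⟩ := List.append_of_mem (hSv x hx)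
  simp only [List.mem_append, List.mem_cons] at hv
  rw [List.foldl_append, List.foldl_cons]
  have hd₁ := pairwise_foldl_colInsert hd v₁
  have h₁ : ContainsTop S k (v₁.foldl colInsert d) :=
    h.foldl_colInsert hd fun b hb => hv b (.inl hb)
  -- once `x` is inserted, it stays as long as every larger letter of `S` is present
  refine mem_foldl_colInsert (S := ↑S) (T := {y | y ∈ S ∧ x ≤ y})
    (fun _ hy z hz hyz => ⟨hz, hy.2.trans hyz.le⟩) (pairwise_colInsert hd₁ x)
    (fun b hb => hv b (.inr (.inr hb))) ?_ x ⟨hx, le_rfl⟩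
  rintro y ⟨hy, hxy⟩
  rcases hxy.eq_or_lt with rfl | hxy
  · exact mem_colInsert_self _ _
  · exact mem_colInsert_of_mem hd₁ (h₁ y hy (hxk ▸ card_filter_lt_lt_of_lt hy hxy)) (.inl hxy.le)

theorem ContainsTop.foldl_colInsert_replicate (hd : d.Pairwise (· > ·)) (hv : ∀ b ∈ v, b ∈ S)
    (hSv : ∀ s ∈ S, s ∈ v) (h : ContainsTop S k d) (j : ℕ) :
    ContainsTop S (k + j) ((List.replicate j v).flatten.foldl colInsert d) := by
  induction j generalizing k d with
  | zero => exact h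
  | succ j ih =>
    rw [List.replicate_succ, List.flatten_cons, List.foldl_append, ← add_comm 1, ← add_assoc]
    exact ih (pairwise_foldl_colInsert hd v) (h.foldl_colInsert_succ hd hv hSv)

end Column

theorem mem_column_wordStar_append {n : ℕ} {w : List (Fin n)} {a : Fin n} (ha : a ∈ w) :
    a ∈ column (wordStar w ++ (List.replicate (n - 1) w).flatten) := by
  set S := w.toFinset
  have hv : ∀ b ∈ w, b ∈ S := fun _ => List.mem_toFinset.2
  have hSv : ∀ s ∈ S, s ∈ w := fun _ => List.mem_toFinset.1
  obtain ⟨k, hk, h₀⟩ : ∃ k, S.card ≤ k + (n - 1) ∧ ContainsTop S k (column (wordStar w)) := by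
    by_cases hS : S = Finset.univ
    · -- then `wordStar w` also contains every letter, and provides one more pass
      refine ⟨1, ?_, ContainsTop.foldl_colInsert_succ List.Pairwise.nil
        (fun b _ => hS ▸ Finset.mem_univ b) (fun s _ => ?_) (containsTop_zero S [])⟩
      · rw [hS, Finset.card_univ, Fintype.card_fin]
        have := a.pos
        omega
      · have := s.isLt
        exact List.mem_map.2 ⟨⟨n - 1 - s, by omega⟩,
          List.mem_reverse.2 (hSv _ (hS ▸ Finset.mem_univ _)), Fin.ext (by dsimp only; omega)⟩
    · refine ⟨0, ?_, containsTop_zero S _⟩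
      have := (Finset.card_lt_iff_ne_univ S).2 hS
      rw [Fintype.card_fin] at this
      omega
  have hfin :=
    h₀.foldl_colInsert_replicate (pairwise_foldl_colInsert List.Pairwise.nil _) hv hSv (n - 1)
  rw [column, List.foldl_append]
  exact hfin a (hv a ha) ((card_filter_lt_lt_card (hv a ha)).trans_le hk)

section Congruence

open FreeMonoid

variable {n : ℕ}

theorem stylCon_append_append (pre post : List (Fin n)) {u v : List (Fin n)}
    (h : stylCon n (ofList u) (ofList v)) :
    stylCon n (ofList (pre ++ u ++ post)) (ofList (pre ++ v ++ post)) := by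
  simp only [ofList_append]
  exact (stylCon n).mul ((stylCon n).mul ((stylCon n).refl _) h) ((stylCon n).refl _)

theorem stylCon_knuth₁ (pre post : List (Fin n)) {a b c : Fin n} (hab : a ≤ b) (hbc : b < c) :
    stylCon n (ofList (pre ++ a :: c :: b :: post)) (ofList (pre ++ c :: a :: b :: post)) := by
  simpa using stylCon_append_append pre post (u := [a, c, b]) (v := [c, a, b])
    (ConGen.Rel.of _ _ (StylRel.knuth₁ a b c hab hbc))

theorem stylCon_knuth₂ (pre post : List (Fin n)) {a b c : Fin n} (hab : a < b) (hbc : b ≤ c) :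
    stylCon n (ofList (pre ++ b :: a :: c :: post)) (ofList (pre ++ b :: c :: a :: post)) := by
  simpa using stylCon_append_append pre post (u := [b, a, c]) (v := [b, c, a])
    (ConGen.Rel.of _ _ (StylRel.knuth₂ a b c hab hbc))

theorem stylCon_idem (pre post : List (Fin n)) (a : Fin n) :
    stylCon n (ofList (pre ++ a :: a :: post)) (ofList (pre ++ a :: post)) := by
  simpa using stylCon_append_append pre post (u := [a, a]) (v := [a])
    (ConGen.Rel.of _ _ (StylRel.idem a))

theorem stylCon_move_left_past_smaller (pre : List (Fin n)) {L : List (Fin n)} {p a : Fin n}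
    (hL : (p :: L).Pairwise (· > ·)) (hpa : p ≤ a) :
    stylCon n (ofList (pre ++ p :: (L ++ [a]))) (ofList (pre ++ p :: a :: L)) := by
  induction L generalizing pre p with
  | nil => exact (stylCon n).refl _
  | cons l L ih =>
    obtain ⟨hpl, hlL⟩ := List.pairwise_cons.1 hL
    have hlp : l < p := hpl l List.mem_cons_self
    have h := ih (pre ++ [p]) hlL (hlp.le.trans hpa)
    simp only [List.append_assoc, List.cons_append, List.nil_append] at h
    exact (stylCon n).trans h (stylCon_knuth₂ pre L hlp hpa)

theorem stylCon_move_left_past_larger {U : List (Fin n)} {p h : Fin n} (t : List (Fin n))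
    (hU : (U ++ [h]).Pairwise (· > ·)) (hph : p ≤ h) :
    stylCon n (ofList (U ++ p :: h :: t)) (ofList (p :: (U ++ h :: t))) := by
  induction U using List.reverseRecOn generalizing h t with
  | nil => exact (stylCon n).refl _
  | append_singleton U u ih =>
    have hu : h < u := (List.pairwise_append.1 hU).2.2 u (by simp) h (by simp)
    have hU' : (U ++ [u]).Pairwise (· > ·) := hU.sublist (by simp)
    have h₁ := stylCon_knuth₁ U t hph hu
    have h₂ := ih (h :: t) hU' (hph.trans hu.le)
    simp only [List.append_assoc, List.cons_append, List.nil_append] at h₁ h₂ ⊢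
    exact (stylCon n).trans ((stylCon n).symm h₁) h₂

theorem stylCon_append_singleton_of_mem {d : List (Fin n)} (hd : d.Pairwise (· > ·)) {a : Fin n}
    (ha : a ∈ d) : stylCon n (ofList (d ++ [a])) (ofList d) := by
  obtain ⟨U, L, rfl⟩ := List.append_of_mem ha
  have h := stylCon_move_left_past_smaller U (hd.sublist (List.sublist_append_right U _)) le_rfl
  simp only [List.append_assoc, List.cons_append] at h ⊢
  exact (stylCon n).trans h (stylCon_idem U L a)

theorem exists_stylCon_append_singleton_colInsert {d : List (Fin n)} (hd : d.Pairwise (· > ·))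
    (a : Fin n) : ∃ z, stylCon n (ofList (d ++ [a])) (z * ofList (colInsert d a)) := by
  rcases forall_lt_or_eq_append_cons d a with h | ⟨U, p, L, rfl, hU, hpa⟩
  · exact ⟨1, by rw [colInsert_of_forall_lt h, one_mul]; exact (stylCon n).refl _⟩
  rw [colInsert_append_cons hU hpa]
  rcases hpa.eq_or_lt with rfl | hpa
  · exact ⟨1, by simpa using stylCon_append_singleton_of_mem hd (by simp)⟩
  refine ⟨of p, (stylCon n).trans ?_ (stylCon_move_left_past_larger L ?_ hpa.le)⟩
  · simpa using stylCon_move_left_past_smaller U (hd.sublist (List.sublist_append_right U _)) hpa.le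
  · exact List.pairwise_append.2
      ⟨hd.sublist (List.sublist_append_left _ _), by simp, by simpa using hU⟩

theorem exists_stylCon_append_foldl_colInsert {d : List (Fin n)} (hd : d.Pairwise (· > ·))
    (v : List (Fin n)) : ∃ z, stylCon n (ofList (d ++ v)) (z * ofList (v.foldl colInsert d)) := by
  induction v generalizing d with
  | nil => exact ⟨1, by simpa using (stylCon n).refl _⟩
  | cons a v ih =>
    obtain ⟨z₁, h₁⟩ := exists_stylCon_append_singleton_colInsert hd a
    obtain ⟨z₂, h₂⟩ := ih (pairwise_colInsert hd a)
    refine ⟨z₁ * z₂, ?_⟩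
    have h₁' := (stylCon n).mul h₁ ((stylCon n).refl (ofList v))
    rw [mul_assoc, ← ofList_append, ← ofList_append, List.append_assoc, List.singleton_append]
      at h₁'
    rw [List.foldl_cons, mul_assoc]
    exact (stylCon n).trans h₁' ((stylCon n).mul ((stylCon n).refl z₁) h₂)

theorem stylCon_append_of_forall_mem {d v : List (Fin n)} (hd : d.Pairwise (· > ·))
    (hv : ∀ a ∈ v, a ∈ d) : stylCon n (ofList (d ++ v)) (ofList d) := by
  induction v using List.reverseRecOn with
  | nil => simpa using (stylCon n).refl _
  | append_singleton v a ih =>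
    simp only [List.mem_append, List.mem_singleton] at hv
    have h := stylCon_append_append [] [a] (ih fun b hb => hv b (.inl hb))
    rw [List.nil_append, List.append_assoc] at h
    exact (stylCon n).trans h (stylCon_append_singleton_of_mem hd (hv a (.inr rfl)))

theorem stylCon_append_of_forall_mem_column {u v : List (Fin n)} (hv : ∀ a ∈ v, a ∈ column u) :
    stylCon n (ofList (u ++ v)) (ofList u) := by
  obtain ⟨z, hz⟩ := exists_stylCon_append_foldl_colInsert (d := []) List.Pairwise.nil u
  rw [List.nil_append] at hz
  have hcol := stylCon_append_of_forall_mem (pairwise_foldl_colInsert List.Pairwise.nil u) hv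
  have h := (stylCon n).mul hz ((stylCon n).refl (ofList v))
  rw [mul_assoc, ← ofList_append, ← ofList_append] at h
  exact (stylCon n).trans h ((stylCon n).trans ((stylCon n).mul ((stylCon n).refl z) hcol)
    ((stylCon n).symm hz))

end Congruence

theorem FreeMonoid.pow_eq_ofList_flatten_replicate {α : Type*} (w : FreeMonoid α) (k : ℕ) :
    w ^ k = ofList (List.replicate k (toList w)).flatten := by
  rw [FreeMonoid.ofList_flatten, List.map_replicate, List.prod_replicate, FreeMonoid.ofList_toList]

theorem styl_involution_identity_general (n : ℕ) (w : FreeMonoid (Fin n)) :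
    stylCon n (FreeMonoid.ofList (wordStar (FreeMonoid.toList w)) * w ^ (n - 1))
              (FreeMonoid.ofList (wordStar (FreeMonoid.toList w)) * w ^ n) := by
  cases n with
  | zero => exact (stylCon 0).refl _ -- `0 - 1 = 0` in `ℕ`
  | succ m =>
    have key := stylCon_append_of_forall_mem_column
      (u := wordStar w.toList ++ (List.replicate m w.toList).flatten) (v := w.toList)
      fun a ha => mem_column_wordStar_append ha
    rw [FreeMonoid.ofList_append, FreeMonoid.ofList_append, FreeMonoid.ofList_toList,
      ← FreeMonoid.pow_eq_ofList_flatten_replicate] at key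
    rw [Nat.add_sub_cancel, pow_succ, ← mul_assoc]
    exact (stylCon _).symm key

/-- For `n ≥ 2`, the stylic monoid with involution satisfies
`x^* x^{n-1} ≈ x^* x^n`: for every word `w`, `w^* w^{n-1} ≡_styl w^* w^n`. -/
theorem styl_involution_identity (n : ℕ) (hn : 2 ≤ n) (w : FreeMonoid (Fin n)) :
    stylCon n (FreeMonoid.ofList (wordStar (FreeMonoid.toList w)) * w ^ (n - 1))
              (FreeMonoid.ofList (wordStar (FreeMonoid.toList w)) * w ^ n) :=
  styl_involution_identity_general n w
end

section
/- For every n ≥ 2, the involution monoid (U_{n+1}(𝕋), ⋆), where ⋆ is skew transposition, does not satisfy the involution identity x^* x^{n−1} ≈ x^* x^n: there exists a matrix M ∈ U_{n+1}(𝕋) such that M^⋆ M^{n−1} ≠ M^⋆ M^n. -/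
/-!
Take for `M` the tropical path matrix with weight `1` on the edge `0 → 1`, weight `0` on the
other superdiagonal edges and `-∞` elsewhere. Since the only walk from `i` to `j ≥ i` follows the
path (pausing on loops of weight `0`), `(M^k)_{i,j}` is the weight of that path when
`j - i ≤ k` and `-∞` otherwise. Skew transposition reverses the path, so `M^⋆` carries its
weight `1` on the last edge and `(M^⋆ M^k)_{0,n} = max ((M^k)_{0,n}, (M^k)_{1,n})`. For
`k = n - 1` the path from `0` is too long and this is `0`; for `k = n` it is `1`.
-/

open Finset

lemma Finset.sup_eq_sup_pair_of_eq_bot {α β : Type*} [SemilatticeSup α] [OrderBot α]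
    {s : Finset β} {f : β → α} {a b : β} (ha : a ∈ s) (hb : b ∈ s)
    (h : ∀ x ∈ s, x ≠ a → x ≠ b → f x = ⊥) : s.sup f = f a ⊔ f b := by
  refine le_antisymm (Finset.sup_le fun x hx => ?_) (sup_le (le_sup ha) (le_sup hb))
  by_cases hxa : x = a
  · exact hxa ▸ le_sup_left
  by_cases hxb : x = b
  · exact hxb ▸ le_sup_right
  · simp [h x hx hxa hxb]

def pathMatrix (m : ℕ) (w : ℕ → ℝ) : Matrix (Fin (m + 1)) (Fin (m + 1)) Trop :=
  fun i j => if i = j then 0 else if (j : ℕ) = i + 1 then (w i : Trop) else ⊥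

section pathMatrix

variable {m : ℕ} (w : ℕ → ℝ)

lemma pathMatrix_isUnitriangular : IsUnitriangular (pathMatrix m w) := by
  refine ⟨fun i => if_pos rfl, fun i j hji => ?_⟩
  rw [pathMatrix, if_neg hji.ne', if_neg (by omega)]

lemma skewT_pathMatrix : skewT (pathMatrix m w) = pathMatrix m (fun l => w (m - 1 - l)) := by
  ext i j
  have := i.isLt
  have := j.isLt
  simp only [skewT, pathMatrix, Fin.ext_iff]
  split_ifs <;> first | rfl | omega | (congr 2; omega)

lemma tmul_pathMatrix_apply_castSucc (A : Matrix (Fin (m + 1)) (Fin (m + 1)) Trop)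
    (i : Fin m) (j : Fin (m + 1)) :
    tmul (pathMatrix m w) A i.castSucc j = A i.castSucc j ⊔ (w i + A i.succ j) := by
  rw [tmul, Finset.sup_eq_sup_pair_of_eq_bot (mem_univ i.castSucc) (mem_univ i.succ)]
  · simp [pathMatrix, Fin.ext_iff]
  · intro l _ hl hl'
    simp only [pathMatrix, ne_eq, Fin.ext_iff, Fin.val_castSucc, Fin.val_succ] at hl hl' ⊢
    rw [if_neg (by omega), if_neg (by omega), WithBot.bot_add]

lemma tmul_pathMatrix_apply_last (A : Matrix (Fin (m + 1)) (Fin (m + 1)) Trop)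
    (j : Fin (m + 1)) :
    tmul (pathMatrix m w) A (Fin.last m) j = A (Fin.last m) j := by
  rw [tmul, Finset.sup_eq_sup_pair_of_eq_bot (mem_univ (Fin.last m)) (mem_univ (Fin.last m)),
    sup_idem]
  · simp [pathMatrix]
  · intro l _ hl _
    have := l.isLt
    simp only [pathMatrix, ne_eq, Fin.ext_iff, Fin.val_last] at hl ⊢
    rw [if_neg (by omega), if_neg (by omega), WithBot.bot_add]

lemma tpow_pathMatrix_apply (k : ℕ) (i j : Fin (m + 1)) :
    tpow (pathMatrix m w) k i j =
      if (i : ℕ) ≤ j ∧ (j : ℕ) ≤ i + k then ((∑ l ∈ Ico (i : ℕ) j, w l : ℝ) : Trop) else ⊥ := by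
  induction k generalizing i with
  | zero =>
    simp only [tpow, tropId, Fin.ext_iff, add_zero, ← le_antisymm_iff]
    split_ifs with h <;> simp [h]
  | succ k ih =>
    rw [tpow]
    induction i using Fin.lastCases with
    | last =>
      rw [tmul_pathMatrix_apply_last, ih]
      have := j.isLt
      simp only [Fin.val_last]
      congr 1
      exact propext (by omega)
    | cast i =>
      rw [tmul_pathMatrix_apply_castSucc, ih, ih]
      simp only [Fin.val_castSucc, Fin.val_succ]
      have hstep : (w i : Trop) + (if (i : ℕ) + 1 ≤ j ∧ (j : ℕ) ≤ i + 1 + k then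
            ((∑ l ∈ Ico ((i : ℕ) + 1) j, w l : ℝ) : Trop) else ⊥) =
          if (i : ℕ) < j ∧ (j : ℕ) ≤ i + (k + 1) then
            ((∑ l ∈ Ico (i : ℕ) j, w l : ℝ) : Trop) else ⊥ := by
        split_ifs with h h' h'
        · rw [← WithBot.coe_add, sum_eq_sum_Ico_succ_bot h'.1]
        all_goals first | omega | rfl
      rw [hstep]
      split_ifs <;> first | omega | simp

end pathMatrix

/-- For `n ≥ 2`, the involution monoid `(U_{n+1}(𝕋), ⋆)` does not satisfy
`x^* x^{n-1} ≈ x^* x^n`: some upper unitriangular tropical matrix `M` has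
`M^⋆ M^{n-1} ≠ M^⋆ M^n`. -/
theorem tropical_not_satisfies_involution_identity (n : ℕ) (hn : 2 ≤ n) :
    ∃ M : Matrix (Fin (n + 1)) (Fin (n + 1)) Trop, IsUnitriangular M ∧
      tmul (skewT M) (tpow M (n - 1)) ≠ tmul (skewT M) (tpow M n) := by
  set M := pathMatrix n fun l => if l = 0 then 1 else 0
  have hentry (k : ℕ) (hk : n - 1 ≤ k) :
      tmul (skewT M) (tpow M k) 0 (Fin.last n) = if n ≤ k then 1 else 0 := by
    rw [skewT_pathMatrix, show (0 : Fin (n + 1)) = (⟨0, by omega⟩ : Fin n).castSucc from rfl,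
      tmul_pathMatrix_apply_castSucc, tpow_pathMatrix_apply, tpow_pathMatrix_apply]
    simp only [Fin.val_castSucc, Fin.val_succ, Fin.val_last]
    simp [Finset.sum_ite_eq', show 0 < n by omega, show n - 1 ≠ 0 by omega,
      show 1 ≤ n by omega, show n ≤ 1 + k by omega]
    split_ifs <;> simp
  refine ⟨M, pathMatrix_isUnitriangular _, fun h => ?_⟩
  have := congrFun (congrFun h 0) (Fin.last n)
  rw [hentry _ le_rfl, hentry _ (by omega), if_pos le_rfl, if_neg (by omega)] at this
  exact zero_ne_one this
end
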